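/- In the 4-player egalitarian construction, discarding the interval I allows an envy-free partial connected division with egalitarian welfare (1-ε)/3: player 1 gets the entire first block, player 2 the entire second block, player 3 the interval following the second block, and player 4 the entire last-player part. Consequently the instance exhibits an egalitarian dumping paradox of at least 4(1-ε)/3. -/
import Mathlib


open MeasureTheory Set
open scoped ENNReal

/-- A connected division of the cake `[0,1]` among `n` players: each player gets an
open interval, the intervals are pairwise disjoint and contained in `[0,1]`. -/
structure ConnDiv (n : ℕ) where
  pieces : Fin n → Set ℝ
  isInterval : ∀ i, ∃ a b : ℝ, pieces i = Set.Ioo a b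
  subset : ∀ i, pieces i ⊆ Set.Icc (0:ℝ) 1
  disj : Pairwise fun i j => Disjoint (pieces i) (pieces j)

/-- A connected division is complete if the closures of the pieces cover `[0,1]`. -/
def ConnDiv.Complete {n : ℕ} (d : ConnDiv n) : Prop :=
  Set.Icc (0:ℝ) 1 ⊆ ⋃ i, closure (d.pieces i)

/-- Envy-freeness: every player weakly prefers her own piece. -/
def EnvyFree {n : ℕ} (v : Fin n → Measure ℝ) (d : ConnDiv n) : Prop :=
  ∀ i j, v i (d.pieces j) ≤ v i (d.pieces i)

/-- Utilitarian welfare: sum of own-piece values. -/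
noncomputable def util {n : ℕ} (v : Fin n → Measure ℝ) (d : ConnDiv n) : ℝ≥0∞ :=
  ∑ i, v i (d.pieces i)

/-- Egalitarian welfare: minimum own-piece value. -/
noncomputable def egal {n : ℕ} (v : Fin n → Measure ℝ) (d : ConnDiv n) : ℝ≥0∞ :=
  ⨅ i, v i (d.pieces i)

/-- The uniform measure of total mass `m` on the interval `(a,b)`. -/
noncomputable def unifOn (a b m : ℝ) : Measure ℝ :=
  ENNReal.ofReal (m / (b - a)) • volume.restrict (Set.Ioo a b)

/- The 4-player egalitarian construction: the cake is split into 14 equal cells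
`(k/14, (k+1)/14)`.  Main part: first block = cells 0–3, interval `I` = cell 4,
second block = cells 5–8, the interval following the second block = cell 9.
Last-player part: cells 10–13. -/

/-- Player 1: the second and fourth intervals of the first block, each of value
`(1+ε)/4`, and an interval of value `(1-ε)/2` in the last-player part. -/
noncomputable def vP1 (ε : ℝ) : Measure ℝ :=
  unifOn (1/14) (2/14) ((1+ε)/4) + unifOn (3/14) (4/14) ((1+ε)/4) +
    unifOn (11/14) (12/14) ((1-ε)/2)

/-- Player 2: the second and fourth intervals of the second block, each of value
`(1+ε)/4`, and an interval of value `(1-ε)/2` in the last-player part. -/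
noncomputable def vP2 (ε : ℝ) : Measure ℝ :=
  unifOn (6/14) (7/14) ((1+ε)/4) + unifOn (8/14) (9/14) ((1+ε)/4) +
    unifOn (12/14) (13/14) ((1-ε)/2)

/-- Player 3: the third interval of each block, each of value `(1-ε)/3`, the
interval `I` of value `ε`, and the interval following the second block, of
value `(1-ε)/3`. -/
noncomputable def vP3 (ε : ℝ) : Measure ℝ :=
  unifOn (2/14) (3/14) ((1-ε)/3) + unifOn (4/14) (5/14) ε +
    unifOn (7/14) (8/14) ((1-ε)/3) + unifOn (9/14) (10/14) ((1-ε)/3)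

/-- Player 4: the first interval of each block and the two outer intervals of
the last-player part, each of value `1/4`. -/
noncomputable def vP4 : Measure ℝ :=
  unifOn 0 (1/14) (1/4) + unifOn (5/14) (6/14) (1/4) +
    unifOn (10/14) (11/14) (1/4) + unifOn (13/14) 1 (1/4)

noncomputable def vEg4 (ε : ℝ) : Fin 4 → Measure ℝ := ![vP1 ε, vP2 ε, vP3 ε, vP4]

noncomputable def cv (S : Set ℝ) (a b : ℝ) : ℝ := (volume (S ∩ Set.Ioo a b)).toReal
lemma cv_nonneg (S : Set ℝ) (a b : ℝ) : 0 ≤ cv S a b := ENNReal.toReal_nonneg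
lemma vol_inter_lt_top (S : Set ℝ) (a b : ℝ) : volume (S ∩ Set.Ioo a b) < ⊤ :=
  lt_of_le_of_lt (measure_mono Set.inter_subset_right) measure_Ioo_lt_top
lemma cv_le (S : Set ℝ) {a b : ℝ} (h : a ≤ b) : cv S a b ≤ b - a := by
  have h2 : (volume (S ∩ Set.Ioo a b)) ≤ volume (Set.Ioo a b) :=
    measure_mono Set.inter_subset_right
  have := ENNReal.toReal_mono (by simp [Real.volume_Ioo]) h2
  rwa [Real.volume_Ioo, ENNReal.toReal_ofReal (by linarith)] at this
lemma unifOn_apply (a b m : ℝ) (hm : 0 ≤ m / (b - a)) (S : Set ℝ) :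
    unifOn a b m S = ENNReal.ofReal (m / (b - a) * cv S a b) := by
  rw [unifOn, Measure.smul_apply, Measure.restrict_apply' measurableSet_Ioo, smul_eq_mul,
    ENNReal.ofReal_mul hm, cv, ENNReal.ofReal_toReal (vol_inter_lt_top S a b).ne]
lemma cv_subset {x y a b : ℝ} (h1 : x ≤ a) (hab : a ≤ b) (h2 : b ≤ y) :
    cv (Set.Ioo x y) a b = b - a := by
  rw [cv, Set.inter_eq_right.mpr (Set.Ioo_subset_Ioo h1 h2), Real.volume_Ioo,
    ENNReal.toReal_ofReal (by linarith)]
lemma cv_zero_left {x y a b : ℝ} (h : y ≤ a) : cv (Set.Ioo x y) a b = 0 := by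
  rw [cv, Set.Ioo_inter_Ioo, Set.Ioo_eq_empty (not_lt.mpr (le_trans (min_le_left _ _) (le_max_of_le_right h)))]
  simp
lemma cv_zero_right {x y a b : ℝ} (h : b ≤ x) : cv (Set.Ioo x y) a b = 0 := by
  rw [cv, Set.Ioo_inter_Ioo, Set.Ioo_eq_empty (not_lt.mpr (le_trans (min_le_right _ _) (le_max_of_le_left h)))]
  simp
lemma cv_pos {a b c d : ℝ} (h : 0 < cv (Set.Ioo a b) c d) : a < d ∧ c < b := by
  constructor
  · by_contra h'
    rw [cv_zero_right (by linarith [not_lt.mp h'])] at h; exact lt_irrefl 0 h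
  · by_contra h'
    rw [cv_zero_left (by linarith [not_lt.mp h'])] at h; exact lt_irrefl 0 h
lemma piece_full {p : Set ℝ} (hp : ∃ a b : ℝ, p = Set.Ioo a b) {c d e f u v : ℝ}
    (h1 : 0 < cv p c d) (h2 : 0 < cv p e f) (hdu : d ≤ u) (huv : u ≤ v) (hve : v ≤ e) :
    cv p u v = v - u := by
  obtain ⟨a, b, rfl⟩ := hp
  obtain ⟨had, -⟩ := cv_pos h1
  obtain ⟨-, heb⟩ := cv_pos h2
  exact cv_subset (by linarith) huv (by linarith)
lemma vol_closure_inter {p : Set ℝ} (hp : ∃ c d : ℝ, p = Set.Ioo c d) (S : Set ℝ) :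
    volume (closure p ∩ S) ≤ volume (p ∩ S) := by
  obtain ⟨c, d, rfl⟩ := hp
  have hsub : closure (Set.Ioo c d) ∩ S ⊆ (Set.Ioo c d ∩ S) ∪ {c, d} := by
    intro t ⟨ht1, ht2⟩
    rcases lt_or_ge c d with h | h
    · rw [closure_Ioo h.ne] at ht1
      rcases eq_or_lt_of_le ht1.1 with h1 | h1
      · exact Or.inr (Or.inl h1.symm)
      rcases eq_or_lt_of_le ht1.2 with h2 | h2
      · exact Or.inr (Or.inr h2)
      · exact Or.inl ⟨⟨h1, h2⟩, ht2⟩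
    · rw [Set.Ioo_eq_empty (not_lt.mpr h), closure_empty] at ht1
      exact absurd ht1 (Set.notMem_empty t)
  calc volume (closure (Set.Ioo c d) ∩ S) ≤ volume ((Set.Ioo c d ∩ S) ∪ {c, d}) :=
        measure_mono hsub
    _ ≤ volume (Set.Ioo c d ∩ S) + volume ({c, d} : Set ℝ) := measure_union_le _ _
    _ = volume (Set.Ioo c d ∩ S) := by
        rw [show ({c, d} : Set ℝ) = insert c {d} from rfl,
          (Set.Finite.insert c (Set.finite_singleton d)).measure_zero volume, add_zero]
lemma sum_cv (x : ConnDiv 4) (hc : x.Complete) {a b : ℝ} (h0 : 0 ≤ a) (hab : a ≤ b)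
    (h1 : b ≤ 1) :
    cv (x.pieces 0) a b + cv (x.pieces 1) a b + cv (x.pieces 2) a b + cv (x.pieces 3) a b
      = b - a := by
  have hmeas : ∀ i, MeasurableSet (x.pieces i) := fun i => by
    obtain ⟨c, d, h⟩ := x.isInterval i; rw [h]; exact measurableSet_Ioo
  have hEN : (∑ i : Fin 4, volume (x.pieces i ∩ Set.Ioo a b)) = volume (Set.Ioo a b) := by
    apply le_antisymm
    · have hd : Pairwise (Function.onFun Disjoint fun i => x.pieces i ∩ Set.Ioo a b) :=
        fun i j hij => ((x.disj hij).mono Set.inter_subset_left Set.inter_subset_left)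
      calc (∑ i : Fin 4, volume (x.pieces i ∩ Set.Ioo a b))
          = ∑' i : Fin 4, volume (x.pieces i ∩ Set.Ioo a b) := (tsum_fintype _).symm
        _ = volume (⋃ i, x.pieces i ∩ Set.Ioo a b) :=
            (measure_iUnion hd fun i => (hmeas i).inter measurableSet_Ioo).symm
        _ ≤ volume (Set.Ioo a b) := measure_mono (Set.iUnion_subset fun i => Set.inter_subset_right)
    · have hsub : Set.Ioo a b ⊆ ⋃ i, closure (x.pieces i) ∩ Set.Ioo a b := by
        intro t ht
        obtain ⟨s, hs⟩ := Set.mem_iUnion.mp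
          (hc ⟨le_trans h0 ht.1.le, le_trans ht.2.le h1⟩)
        exact Set.mem_iUnion.mpr ⟨s, hs, ht⟩
      calc volume (Set.Ioo a b) ≤ volume (⋃ i, closure (x.pieces i) ∩ Set.Ioo a b) :=
            measure_mono hsub
        _ ≤ ∑' i : Fin 4, volume (closure (x.pieces i) ∩ Set.Ioo a b) := measure_iUnion_le _
        _ = ∑ i : Fin 4, volume (closure (x.pieces i) ∩ Set.Ioo a b) := tsum_fintype _
        _ ≤ ∑ i : Fin 4, volume (x.pieces i ∩ Set.Ioo a b) :=
            Finset.sum_le_sum fun i _ => vol_closure_inter (x.isInterval i) _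
  have e : ∀ i, volume (x.pieces i ∩ Set.Ioo a b) = ENNReal.ofReal (cv (x.pieces i) a b) :=
    fun i => (ENNReal.ofReal_toReal (vol_inter_lt_top _ _ _).ne).symm
  rw [Fin.sum_univ_four, e 0, e 1, e 2, e 3, Real.volume_Ioo,
    ← ENNReal.ofReal_add (cv_nonneg _ _ _) (cv_nonneg _ _ _),
    ← ENNReal.ofReal_add (add_nonneg (cv_nonneg _ _ _) (cv_nonneg _ _ _)) (cv_nonneg _ _ _),
    ← ENNReal.ofReal_add (add_nonneg (add_nonneg (cv_nonneg _ _ _) (cv_nonneg _ _ _)) (cv_nonneg _ _ _)) (cv_nonneg _ _ _)] at hEN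
  have h2 := cv_nonneg (x.pieces 0) a b
  have h3 := cv_nonneg (x.pieces 1) a b
  have h4 := cv_nonneg (x.pieces 2) a b
  have h5 := cv_nonneg (x.pieces 3) a b
  exact (ENNReal.ofReal_eq_ofReal_iff (by positivity) (by linarith)).mp hEN

lemma vP1_apply (ε : ℝ) (h0 : 0 ≤ ε) (h1 : ε ≤ 1) (S : Set ℝ) :
    vP1 ε S = ENNReal.ofReal (7/2*(1+ε) * (cv S (1/14) (2/14) + cv S (3/14) (4/14)) +
      7*(1-ε) * cv S (11/14) (12/14)) := by
  have hm1 : (0:ℝ) ≤ (1+ε)/4 / (2/14 - 1/14) :=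
    div_nonneg (div_nonneg (by linarith) (by norm_num)) (by norm_num)
  have hm2 : (0:ℝ) ≤ (1+ε)/4 / (4/14 - 3/14) :=
    div_nonneg (div_nonneg (by linarith) (by norm_num)) (by norm_num)
  have hm3 : (0:ℝ) ≤ (1-ε)/2 / (12/14 - 11/14) :=
    div_nonneg (div_nonneg (by linarith) (by norm_num)) (by norm_num)
  rw [vP1, Measure.add_apply, Measure.add_apply,
    unifOn_apply _ _ _ hm1 S, unifOn_apply _ _ _ hm2 S, unifOn_apply _ _ _ hm3 S,
    ← ENNReal.ofReal_add (mul_nonneg hm1 (cv_nonneg _ _ _)) (mul_nonneg hm2 (cv_nonneg _ _ _)),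
    ← ENNReal.ofReal_add (add_nonneg (mul_nonneg hm1 (cv_nonneg _ _ _)) (mul_nonneg hm2 (cv_nonneg _ _ _))) (mul_nonneg hm3 (cv_nonneg _ _ _))]
  congr 1
  norm_num
  ring

lemma vP2_apply (ε : ℝ) (h0 : 0 ≤ ε) (h1 : ε ≤ 1) (S : Set ℝ) :
    vP2 ε S = ENNReal.ofReal (7/2*(1+ε) * (cv S (6/14) (7/14) + cv S (8/14) (9/14)) +
      7*(1-ε) * cv S (12/14) (13/14)) := by
  have hm1 : (0:ℝ) ≤ (1+ε)/4 / (7/14 - 6/14) :=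
    div_nonneg (div_nonneg (by linarith) (by norm_num)) (by norm_num)
  have hm2 : (0:ℝ) ≤ (1+ε)/4 / (9/14 - 8/14) :=
    div_nonneg (div_nonneg (by linarith) (by norm_num)) (by norm_num)
  have hm3 : (0:ℝ) ≤ (1-ε)/2 / (13/14 - 12/14) :=
    div_nonneg (div_nonneg (by linarith) (by norm_num)) (by norm_num)
  rw [vP2, Measure.add_apply, Measure.add_apply,
    unifOn_apply _ _ _ hm1 S, unifOn_apply _ _ _ hm2 S, unifOn_apply _ _ _ hm3 S,
    ← ENNReal.ofReal_add (mul_nonneg hm1 (cv_nonneg _ _ _)) (mul_nonneg hm2 (cv_nonneg _ _ _)),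
    ← ENNReal.ofReal_add (add_nonneg (mul_nonneg hm1 (cv_nonneg _ _ _)) (mul_nonneg hm2 (cv_nonneg _ _ _))) (mul_nonneg hm3 (cv_nonneg _ _ _))]
  congr 1
  norm_num
  ring

lemma vP3_apply (ε : ℝ) (h0 : 0 ≤ ε) (h1 : ε ≤ 1) (S : Set ℝ) :
    vP3 ε S = ENNReal.ofReal (14/3*(1-ε) * (cv S (2/14) (3/14) + cv S (7/14) (8/14) +
      cv S (9/14) (10/14)) + 14*ε * cv S (4/14) (5/14)) := by
  have hm1 : (0:ℝ) ≤ (1-ε)/3 / (3/14 - 2/14) :=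
    div_nonneg (div_nonneg (by linarith) (by norm_num)) (by norm_num)
  have hm2 : (0:ℝ) ≤ ε / (5/14 - 4/14) := div_nonneg h0 (by norm_num)
  have hm3 : (0:ℝ) ≤ (1-ε)/3 / (8/14 - 7/14) :=
    div_nonneg (div_nonneg (by linarith) (by norm_num)) (by norm_num)
  have hm4 : (0:ℝ) ≤ (1-ε)/3 / (10/14 - 9/14) :=
    div_nonneg (div_nonneg (by linarith) (by norm_num)) (by norm_num)
  rw [vP3, Measure.add_apply, Measure.add_apply, Measure.add_apply,
    unifOn_apply _ _ _ hm1 S, unifOn_apply _ _ _ hm2 S, unifOn_apply _ _ _ hm3 S,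
    unifOn_apply _ _ _ hm4 S,
    ← ENNReal.ofReal_add (mul_nonneg hm1 (cv_nonneg _ _ _)) (mul_nonneg hm2 (cv_nonneg _ _ _)),
    ← ENNReal.ofReal_add (add_nonneg (mul_nonneg hm1 (cv_nonneg _ _ _)) (mul_nonneg hm2 (cv_nonneg _ _ _))) (mul_nonneg hm3 (cv_nonneg _ _ _)),
    ← ENNReal.ofReal_add (add_nonneg (add_nonneg (mul_nonneg hm1 (cv_nonneg _ _ _)) (mul_nonneg hm2 (cv_nonneg _ _ _))) (mul_nonneg hm3 (cv_nonneg _ _ _))) (mul_nonneg hm4 (cv_nonneg _ _ _))]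
  congr 1
  norm_num
  ring

lemma vP4_apply (S : Set ℝ) :
    vP4 S = ENNReal.ofReal (7/2 * (cv S 0 (1/14) + cv S (5/14) (6/14) +
      cv S (10/14) (11/14) + cv S (13/14) 1)) := by
  have hm1 : (0:ℝ) ≤ 1/4 / (1/14 - 0) := by norm_num
  have hm2 : (0:ℝ) ≤ 1/4 / (6/14 - 5/14) := by norm_num
  have hm3 : (0:ℝ) ≤ 1/4 / (11/14 - 10/14) := by norm_num
  have hm4 : (0:ℝ) ≤ 1/4 / (1 - 13/14) := by norm_num
  rw [vP4, Measure.add_apply, Measure.add_apply, Measure.add_apply,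
    unifOn_apply _ _ _ hm1 S, unifOn_apply _ _ _ hm2 S, unifOn_apply _ _ _ hm3 S,
    unifOn_apply _ _ _ hm4 S,
    ← ENNReal.ofReal_add (mul_nonneg hm1 (cv_nonneg _ _ _)) (mul_nonneg hm2 (cv_nonneg _ _ _)),
    ← ENNReal.ofReal_add (add_nonneg (mul_nonneg hm1 (cv_nonneg _ _ _)) (mul_nonneg hm2 (cv_nonneg _ _ _))) (mul_nonneg hm3 (cv_nonneg _ _ _)),
    ← ENNReal.ofReal_add (add_nonneg (add_nonneg (mul_nonneg hm1 (cv_nonneg _ _ _)) (mul_nonneg hm2 (cv_nonneg _ _ _))) (mul_nonneg hm3 (cv_nonneg _ _ _))) (mul_nonneg hm4 (cv_nonneg _ _ _))]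
  congr 1
  norm_num
  ring

set_option maxHeartbeats 2000000 in
lemma impossibility (ε : ℝ)
 (a1 a2 a3 a4 a6 a7 a8 a9 a11 a12 : ℝ) (b1 b2 b3 b4 b6 b7 b8 b9 b11 b12 : ℝ) (c1 c2 c3 c4 c6 c7 c8 c9 c11 c12 : ℝ)
 (d0 d1 d2 d3 d4 d5 d6 d7 d8 d9 d10 d11 d12 d13 : ℝ)
 (hε : 0 < ε) (hε' : ε < 1/100)
 (na1 : 0 ≤ a1)
 (na2 : 0 ≤ a2)
 (na3 : 0 ≤ a3)
 (na4 : 0 ≤ a4)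
 (na6 : 0 ≤ a6)
 (na7 : 0 ≤ a7)
 (na8 : 0 ≤ a8)
 (na9 : 0 ≤ a9)
 (na11 : 0 ≤ a11)
 (na12 : 0 ≤ a12)
 (nb1 : 0 ≤ b1)
 (nb2 : 0 ≤ b2)
 (nb3 : 0 ≤ b3)
 (nb4 : 0 ≤ b4)
 (nb6 : 0 ≤ b6)
 (nb7 : 0 ≤ b7)
 (nb8 : 0 ≤ b8)
 (nb9 : 0 ≤ b9)
 (nb11 : 0 ≤ b11)
 (nb12 : 0 ≤ b12)
 (nc1 : 0 ≤ c1)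
 (nc2 : 0 ≤ c2)
 (nc3 : 0 ≤ c3)
 (nc4 : 0 ≤ c4)
 (nc6 : 0 ≤ c6)
 (nc7 : 0 ≤ c7)
 (nc8 : 0 ≤ c8)
 (nc9 : 0 ≤ c9)
 (nc11 : 0 ≤ c11)
 (nc12 : 0 ≤ c12)
 (nd0 : 0 ≤ d0)
 (nd1 : 0 ≤ d1)
 (nd2 : 0 ≤ d2)
 (nd3 : 0 ≤ d3)
 (nd4 : 0 ≤ d4)
 (nd5 : 0 ≤ d5)
 (nd6 : 0 ≤ d6)
 (nd7 : 0 ≤ d7)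
 (nd8 : 0 ≤ d8)
 (nd9 : 0 ≤ d9)
 (nd10 : 0 ≤ d10)
 (nd11 : 0 ≤ d11)
 (nd12 : 0 ≤ d12)
 (nd13 : 0 ≤ d13)
 (ub0 : d0 ≤ 1/14) (ub5 : d5 ≤ 1/14) (ub10 : d10 ≤ 1/14) (ub13 : d13 ≤ 1/14)
 (s1 : a1 + b1 + c1 + d1 = 1/14)
 (s2 : a2 + b2 + c2 + d2 = 1/14)
 (s3 : a3 + b3 + c3 + d3 = 1/14)
 (s4 : a4 + b4 + c4 + d4 = 1/14)
 (s6 : a6 + b6 + c6 + d6 = 1/14)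
 (s7 : a7 + b7 + c7 + d7 = 1/14)
 (s8 : a8 + b8 + c8 + d8 = 1/14)
 (s9 : a9 + b9 + c9 + d9 = 1/14)
 (s11 : a11 + b11 + c11 + d11 = 1/14)
 (s12 : a12 + b12 + c12 + d12 = 1/14)
 (hA1 : 0 < d0 → 0 < d5 → d1 = 1/14 ∧ d3 = 1/14)
 (hA2 : 0 < d0 → 0 < d10 → d1 = 1/14 ∧ d3 = 1/14)
 (hA3 : 0 < d0 → 0 < d13 → d1 = 1/14 ∧ d3 = 1/14)
 (hB1 : 0 < d5 → 0 < d10 → d6 = 1/14 ∧ d8 = 1/14)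
 (hB2 : 0 < d5 → 0 < d13 → d6 = 1/14 ∧ d8 = 1/14)
 (hCC : 0 < d10 → 0 < d13 → d11 = 1/14 ∧ d12 = 1/14)
 (hD : 0 < d4 → 0 < d10 → d5 = 1/14)
 (hP1 : 0 < a1 → 0 < a3 → a2 = 1/14)
 (hP2 : 0 < b6 → 0 < b8 → b7 = 1/14)
 (hP3 : 0 < c4 → 0 < c9 → c7 = 1/14)
 (e03 : 7/2*(1+ε)*(d1+d3) + 7*(1-ε)*d11 ≤ 7/2*(1+ε)*(a1+a3) + 7*(1-ε)*a11)
 (e13 : 7/2*(1+ε)*(d6+d8) + 7*(1-ε)*d12 ≤ 7/2*(1+ε)*(b6+b8) + 7*(1-ε)*b12)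
 (e20 : 14/3*(1-ε)*(a2+a7+a9) + 14*ε*a4 ≤ 14/3*(1-ε)*(c2+c7+c9) + 14*ε*c4)
 (e21 : 14/3*(1-ε)*(b2+b7+b9) + 14*ε*b4 ≤ 14/3*(1-ε)*(c2+c7+c9) + 14*ε*c4)
 (o2 : 1/4 < 14/3*(1-ε)*(c2+c7+c9) + 14*ε*c4)
 (o3 : 1/4 < 7/2*(d0+d5+d10+d13)) : False := by
  have hq : 1/14 < d0 + d5 + d10 + d13 := by linarith
  have hd0 : d0 = 0 := by
    by_contra hcon
    have h0 : 0 < d0 := lt_of_le_of_ne nd0 (Ne.symm hcon)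
    have hd13 : d1 = 1/14 ∧ d3 = 1/14 := by
      rcases lt_or_ge 0 d5 with h' | h'
      · exact hA1 h0 h'
      rcases lt_or_ge 0 d10 with h'' | h''
      · exact hA2 h0 h''
      rcases lt_or_ge 0 d13 with h3 | h3
      · exact hA3 h0 h3
      · exfalso; linarith
    obtain ⟨x1, x3⟩ := hd13
    have ha1 : a1 = 0 := by linarith
    have ha3 : a3 = 0 := by linarith
    rw [x1, x3, ha1, ha3] at e03
    have t1 : 7*(1-ε)*a11 ≤ 7*(1-ε)*(1/14) :=
      mul_le_mul_of_nonneg_left (by linarith) (by linarith)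
    have t2 : 0 ≤ 7*(1-ε)*d11 := mul_nonneg (by linarith) nd11
    linarith
  have hd5 : d5 = 0 := by
    by_contra hcon
    have h0 : 0 < d5 := lt_of_le_of_ne nd5 (Ne.symm hcon)
    have hd68 : d6 = 1/14 ∧ d8 = 1/14 := by
      rcases lt_or_ge 0 d10 with h' | h'
      · exact hB1 h0 h'
      rcases lt_or_ge 0 d13 with h'' | h''
      · exact hB2 h0 h''
      · exfalso; linarith
    obtain ⟨x6, x8⟩ := hd68
    have hb6 : b6 = 0 := by linarith
    have hb8 : b8 = 0 := by linarith
    rw [x6, x8, hb6, hb8] at e13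
    have t1 : 7*(1-ε)*b12 ≤ 7*(1-ε)*(1/14) :=
      mul_le_mul_of_nonneg_left (by linarith) (by linarith)
    have t2 : 0 ≤ 7*(1-ε)*d12 := mul_nonneg (by linarith) nd12
    linarith
  have h10 : 0 < d10 := by linarith
  have h13' : 0 < d13 := by linarith
  obtain ⟨x11, x12⟩ := hCC h10 h13'
  have ha11 : a11 = 0 := by linarith
  have hb12 : b12 = 0 := by linarith
  rw [x11, ha11] at e03
  rw [x12, hb12] at e13
  have ha1p : 0 < a1 := by
    by_contra hcon
    have h00 : a1 = 0 := le_antisymm (not_lt.mp hcon) na1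
    rw [h00] at e03
    have t3 : 7/2*(1+ε)*(0+a3) ≤ 7/2*(1+ε)*(1/14) :=
      mul_le_mul_of_nonneg_left (by linarith) (by linarith)
    have t4 : 0 ≤ 7/2*(1+ε)*(d1+d3) := mul_nonneg (by linarith) (by linarith)
    linarith
  have ha3p : 0 < a3 := by
    by_contra hcon
    have h00 : a3 = 0 := le_antisymm (not_lt.mp hcon) na3
    rw [h00] at e03
    have t3 : 7/2*(1+ε)*(a1+0) ≤ 7/2*(1+ε)*(1/14) :=
      mul_le_mul_of_nonneg_left (by linarith) (by linarith)
    have t4 : 0 ≤ 7/2*(1+ε)*(d1+d3) := mul_nonneg (by linarith) (by linarith)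
    linarith
  have hb6p : 0 < b6 := by
    by_contra hcon
    have h00 : b6 = 0 := le_antisymm (not_lt.mp hcon) nb6
    rw [h00] at e13
    have t3 : 7/2*(1+ε)*(0+b8) ≤ 7/2*(1+ε)*(1/14) :=
      mul_le_mul_of_nonneg_left (by linarith) (by linarith)
    have t4 : 0 ≤ 7/2*(1+ε)*(d6+d8) := mul_nonneg (by linarith) (by linarith)
    linarith
  have hb8p : 0 < b8 := by
    by_contra hcon
    have h00 : b8 = 0 := le_antisymm (not_lt.mp hcon) nb8
    rw [h00] at e13
    have t3 : 7/2*(1+ε)*(b6+0) ≤ 7/2*(1+ε)*(1/14) :=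
      mul_le_mul_of_nonneg_left (by linarith) (by linarith)
    have t4 : 0 ≤ 7/2*(1+ε)*(d6+d8) := mul_nonneg (by linarith) (by linarith)
    linarith
  have ha2' : a2 = 1/14 := hP1 ha1p ha3p
  have hb7' : b7 = 1/14 := hP2 hb6p hb8p
  have hc2 : c2 = 0 := by linarith
  have hc7 : c7 = 0 := by linarith
  have hd4 : d4 = 0 := by
    by_contra hcon
    have hp : 0 < d4 := lt_of_le_of_ne nd4 (Ne.symm hcon)
    have := hD hp h10
    linarith
  have hc49 : c4 = 0 ∨ c9 = 0 := by
    by_contra hcon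
    push_neg at hcon
    have := hP3 (lt_of_le_of_ne nc4 (Ne.symm hcon.1)) (lt_of_le_of_ne nc9 (Ne.symm hcon.2))
    linarith
  rcases hc49 with h4' | h9'
  · rw [hc2, hc7, h4'] at e20 e21
    rw [ha2'] at e20
    rw [hb7'] at e21
    rcases le_total a4 (1/28) with hle | hge
    · have hb4 : 1/28 ≤ b4 := by linarith
      have t5 : 14/3*(1-ε)*(1/14) ≤ 14/3*(1-ε)*(b2+1/14+b9) :=
        mul_le_mul_of_nonneg_left (by linarith) (by linarith)
      have t6 : 14*ε*(1/28) ≤ 14*ε*b4 := mul_le_mul_of_nonneg_left hb4 (by linarith)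
      have t7 : 14/3*(1-ε)*(0+0+c9) ≤ 14/3*(1-ε)*(1/14) :=
        mul_le_mul_of_nonneg_left (by linarith) (by linarith)
      linarith
    · have t5 : 14/3*(1-ε)*(1/14) ≤ 14/3*(1-ε)*(1/14+a7+a9) :=
        mul_le_mul_of_nonneg_left (by linarith) (by linarith)
      have t6 : 14*ε*(1/28) ≤ 14*ε*a4 := mul_le_mul_of_nonneg_left hge (by linarith)
      have t7 : 14/3*(1-ε)*(0+0+c9) ≤ 14/3*(1-ε)*(1/14) :=
        mul_le_mul_of_nonneg_left (by linarith) (by linarith)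
      linarith
  · rw [hc2, hc7, h9'] at o2
    have t8 : 14*ε*c4 ≤ 14*ε*(1/14) := mul_le_mul_of_nonneg_left (by linarith) (by linarith)
    linarith

lemma val1_nonneg (ε : ℝ) (h0 : 0 ≤ ε) (h1 : ε ≤ 1) (S : Set ℝ) :
    0 ≤ 7/2*(1+ε) * (cv S (1/14) (2/14) + cv S (3/14) (4/14)) + 7*(1-ε) * cv S (11/14) (12/14) :=
  add_nonneg (mul_nonneg (by linarith) (add_nonneg (cv_nonneg _ _ _) (cv_nonneg _ _ _)))
    (mul_nonneg (by linarith) (cv_nonneg _ _ _))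

lemma val2_nonneg (ε : ℝ) (h0 : 0 ≤ ε) (h1 : ε ≤ 1) (S : Set ℝ) :
    0 ≤ 7/2*(1+ε) * (cv S (6/14) (7/14) + cv S (8/14) (9/14)) + 7*(1-ε) * cv S (12/14) (13/14) :=
  add_nonneg (mul_nonneg (by linarith) (add_nonneg (cv_nonneg _ _ _) (cv_nonneg _ _ _)))
    (mul_nonneg (by linarith) (cv_nonneg _ _ _))

lemma val3_nonneg (ε : ℝ) (h0 : 0 ≤ ε) (h1 : ε ≤ 1) (S : Set ℝ) :
    0 ≤ 14/3*(1-ε) * (cv S (2/14) (3/14) + cv S (7/14) (8/14) + cv S (9/14) (10/14)) +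
      14*ε * cv S (4/14) (5/14) :=
  add_nonneg (mul_nonneg (by linarith) (add_nonneg (add_nonneg (cv_nonneg _ _ _) (cv_nonneg _ _ _)) (cv_nonneg _ _ _)))
    (mul_nonneg (by linarith) (cv_nonneg _ _ _))

lemma dIoo {a b c d : ℝ} (h : min b d ≤ max a c) : Disjoint (Set.Ioo a b) (Set.Ioo c d) :=
  Set.Ioo_disjoint_Ioo.mpr h

set_option maxHeartbeats 2000000 in
/-- Discarding the interval `I` (cell 4) allows an envy-free partial connected
division with egalitarian welfare `(1-ε)/3`: player 1 gets the whole first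
block, player 2 the whole second block, player 3 the interval following the
second block, and player 4 the entire last-player part; consequently the
instance exhibits an egalitarian dumping paradox of at least `4(1-ε)/3`. -/
theorem egalitarian_dumping_four_players (ε : ℝ) (hε : 0 < ε) (hε' : ε < 1/100) :
    ∃ y : ConnDiv 4,
      y.pieces 0 = Set.Ioo 0 (4/14) ∧
      y.pieces 1 = Set.Ioo (5/14) (9/14) ∧
      y.pieces 2 = Set.Ioo (9/14) (10/14) ∧
      y.pieces 3 = Set.Ioo (10/14) 1 ∧
      EnvyFree (vEg4 ε) y ∧ ¬ y.Complete ∧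
      egal (vEg4 ε) y = ENNReal.ofReal ((1-ε)/3) ∧
      ∀ x : ConnDiv 4, x.Complete → EnvyFree (vEg4 ε) x →
        ENNReal.ofReal (4*(1-ε)/3) * egal (vEg4 ε) x ≤ egal (vEg4 ε) y := by
  have hε0 : (0:ℝ) ≤ ε := hε.le
  have hε1 : ε ≤ 1 := by linarith
  obtain ⟨Y, hY0, hY1, hY2, hY3⟩ :
      ∃ Y : ConnDiv 4, Y.pieces 0 = Set.Ioo 0 (4/14) ∧ Y.pieces 1 = Set.Ioo (5/14) (9/14) ∧
        Y.pieces 2 = Set.Ioo (9/14) (10/14) ∧ Y.pieces 3 = Set.Ioo (10/14) 1 := by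
    refine ⟨⟨![Set.Ioo 0 (4/14), Set.Ioo (5/14) (9/14), Set.Ioo (9/14) (10/14),
      Set.Ioo (10/14) 1], ?_, ?_, ?_⟩, rfl, rfl, rfl, rfl⟩
    · intro i
      fin_cases i
      · exact ⟨0, 4/14, rfl⟩
      · exact ⟨5/14, 9/14, rfl⟩
      · exact ⟨9/14, 10/14, rfl⟩
      · exact ⟨10/14, 1, rfl⟩
    · intro i
      fin_cases i
      · exact fun t ht => ⟨le_of_lt ht.1, le_trans ht.2.le (by norm_num)⟩
      · exact fun t ht => ⟨le_trans (by norm_num) ht.1.le, le_trans ht.2.le (by norm_num)⟩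
      · exact fun t ht => ⟨le_trans (by norm_num) ht.1.le, le_trans ht.2.le (by norm_num)⟩
      · exact fun t ht => ⟨le_trans (by norm_num) ht.1.le, ht.2.le⟩
    · intro i j hij
      fin_cases i <;> fin_cases j <;>
        first
          | exact absurd rfl hij
          | exact dIoo (by norm_num [min_def, max_def])
  have u00 : vEg4 ε 0 (Y.pieces 0) = ENNReal.ofReal ((1+ε)/2) := by
    rw [hY0]
    show vP1 ε (Set.Ioo 0 (4/14)) = _
    rw [vP1_apply ε hε0 hε1, cv_subset (show (0:ℝ) ≤ 1/14 by norm_num) (show (1:ℝ)/14 ≤ 2/14 by norm_num) (show (2:ℝ)/14 ≤ 4/14 by norm_num), cv_subset (show (0:ℝ) ≤ 3/14 by norm_num) (show (3:ℝ)/14 ≤ 4/14 by norm_num) (show (4:ℝ)/14 ≤ 4/14 by norm_num), cv_zero_left (x := 0) (b := (12/14)) (show (4:ℝ)/14 ≤ 11/14 by norm_num)]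
    congr 1
    ring
  have u01 : vEg4 ε 0 (Y.pieces 1) = ENNReal.ofReal (0) := by
    rw [hY1]
    show vP1 ε (Set.Ioo (5/14) (9/14)) = _
    rw [vP1_apply ε hε0 hε1, cv_zero_right (y := (9/14)) (a := (1/14)) (show (2:ℝ)/14 ≤ 5/14 by norm_num), cv_zero_right (y := (9/14)) (a := (3/14)) (show (4:ℝ)/14 ≤ 5/14 by norm_num), cv_zero_left (x := (5/14)) (b := (12/14)) (show (9:ℝ)/14 ≤ 11/14 by norm_num)]
    congr 1
    ring
  have u02 : vEg4 ε 0 (Y.pieces 2) = ENNReal.ofReal (0) := by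
    rw [hY2]
    show vP1 ε (Set.Ioo (9/14) (10/14)) = _
    rw [vP1_apply ε hε0 hε1, cv_zero_right (y := (10/14)) (a := (1/14)) (show (2:ℝ)/14 ≤ 9/14 by norm_num), cv_zero_right (y := (10/14)) (a := (3/14)) (show (4:ℝ)/14 ≤ 9/14 by norm_num), cv_zero_left (x := (9/14)) (b := (12/14)) (show (10:ℝ)/14 ≤ 11/14 by norm_num)]
    congr 1
    ring
  have u03 : vEg4 ε 0 (Y.pieces 3) = ENNReal.ofReal ((1-ε)/2) := by
    rw [hY3]
    show vP1 ε (Set.Ioo (10/14) 1) = _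
    rw [vP1_apply ε hε0 hε1, cv_zero_right (y := 1) (a := (1/14)) (show (2:ℝ)/14 ≤ 10/14 by norm_num), cv_zero_right (y := 1) (a := (3/14)) (show (4:ℝ)/14 ≤ 10/14 by norm_num), cv_subset (show (10:ℝ)/14 ≤ 11/14 by norm_num) (show (11:ℝ)/14 ≤ 12/14 by norm_num) (show (12:ℝ)/14 ≤ 1 by norm_num)]
    congr 1
    ring
  have u10 : vEg4 ε 1 (Y.pieces 0) = ENNReal.ofReal (0) := by
    rw [hY0]
    show vP2 ε (Set.Ioo 0 (4/14)) = _
    rw [vP2_apply ε hε0 hε1, cv_zero_left (x := 0) (b := (7/14)) (show (4:ℝ)/14 ≤ 6/14 by norm_num), cv_zero_left (x := 0) (b := (9/14)) (show (4:ℝ)/14 ≤ 8/14 by norm_num), cv_zero_left (x := 0) (b := (13/14)) (show (4:ℝ)/14 ≤ 12/14 by norm_num)]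
    congr 1
    ring
  have u11 : vEg4 ε 1 (Y.pieces 1) = ENNReal.ofReal ((1+ε)/2) := by
    rw [hY1]
    show vP2 ε (Set.Ioo (5/14) (9/14)) = _
    rw [vP2_apply ε hε0 hε1, cv_subset (show (5:ℝ)/14 ≤ 6/14 by norm_num) (show (6:ℝ)/14 ≤ 7/14 by norm_num) (show (7:ℝ)/14 ≤ 9/14 by norm_num), cv_subset (show (5:ℝ)/14 ≤ 8/14 by norm_num) (show (8:ℝ)/14 ≤ 9/14 by norm_num) (show (9:ℝ)/14 ≤ 9/14 by norm_num), cv_zero_left (x := (5/14)) (b := (13/14)) (show (9:ℝ)/14 ≤ 12/14 by norm_num)]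
    congr 1
    ring
  have u12 : vEg4 ε 1 (Y.pieces 2) = ENNReal.ofReal (0) := by
    rw [hY2]
    show vP2 ε (Set.Ioo (9/14) (10/14)) = _
    rw [vP2_apply ε hε0 hε1, cv_zero_right (y := (10/14)) (a := (6/14)) (show (7:ℝ)/14 ≤ 9/14 by norm_num), cv_zero_right (y := (10/14)) (a := (8/14)) (show (9:ℝ)/14 ≤ 9/14 by norm_num), cv_zero_left (x := (9/14)) (b := (13/14)) (show (10:ℝ)/14 ≤ 12/14 by norm_num)]
    congr 1
    ring
  have u13 : vEg4 ε 1 (Y.pieces 3) = ENNReal.ofReal ((1-ε)/2) := by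
    rw [hY3]
    show vP2 ε (Set.Ioo (10/14) 1) = _
    rw [vP2_apply ε hε0 hε1, cv_zero_right (y := 1) (a := (6/14)) (show (7:ℝ)/14 ≤ 10/14 by norm_num), cv_zero_right (y := 1) (a := (8/14)) (show (9:ℝ)/14 ≤ 10/14 by norm_num), cv_subset (show (10:ℝ)/14 ≤ 12/14 by norm_num) (show (12:ℝ)/14 ≤ 13/14 by norm_num) (show (13:ℝ)/14 ≤ 1 by norm_num)]
    congr 1
    ring
  have u20 : vEg4 ε 2 (Y.pieces 0) = ENNReal.ofReal ((1-ε)/3) := by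
    rw [hY0]
    show vP3 ε (Set.Ioo 0 (4/14)) = _
    rw [vP3_apply ε hε0 hε1, cv_subset (show (0:ℝ) ≤ 2/14 by norm_num) (show (2:ℝ)/14 ≤ 3/14 by norm_num) (show (3:ℝ)/14 ≤ 4/14 by norm_num), cv_zero_left (x := 0) (b := (8/14)) (show (4:ℝ)/14 ≤ 7/14 by norm_num), cv_zero_left (x := 0) (b := (10/14)) (show (4:ℝ)/14 ≤ 9/14 by norm_num), cv_zero_left (x := 0) (b := (5/14)) (show (4:ℝ)/14 ≤ 4/14 by norm_num)]
    congr 1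
    ring
  have u21 : vEg4 ε 2 (Y.pieces 1) = ENNReal.ofReal ((1-ε)/3) := by
    rw [hY1]
    show vP3 ε (Set.Ioo (5/14) (9/14)) = _
    rw [vP3_apply ε hε0 hε1, cv_zero_right (y := (9/14)) (a := (2/14)) (show (3:ℝ)/14 ≤ 5/14 by norm_num), cv_subset (show (5:ℝ)/14 ≤ 7/14 by norm_num) (show (7:ℝ)/14 ≤ 8/14 by norm_num) (show (8:ℝ)/14 ≤ 9/14 by norm_num), cv_zero_left (x := (5/14)) (b := (10/14)) (show (9:ℝ)/14 ≤ 9/14 by norm_num), cv_zero_right (y := (9/14)) (a := (4/14)) (show (5:ℝ)/14 ≤ 5/14 by norm_num)]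
    congr 1
    ring
  have u22 : vEg4 ε 2 (Y.pieces 2) = ENNReal.ofReal ((1-ε)/3) := by
    rw [hY2]
    show vP3 ε (Set.Ioo (9/14) (10/14)) = _
    rw [vP3_apply ε hε0 hε1, cv_zero_right (y := (10/14)) (a := (2/14)) (show (3:ℝ)/14 ≤ 9/14 by norm_num), cv_zero_right (y := (10/14)) (a := (7/14)) (show (8:ℝ)/14 ≤ 9/14 by norm_num), cv_subset (show (9:ℝ)/14 ≤ 9/14 by norm_num) (show (9:ℝ)/14 ≤ 10/14 by norm_num) (show (10:ℝ)/14 ≤ 10/14 by norm_num), cv_zero_right (y := (10/14)) (a := (4/14)) (show (5:ℝ)/14 ≤ 9/14 by norm_num)]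
    congr 1
    ring
  have u23 : vEg4 ε 2 (Y.pieces 3) = ENNReal.ofReal (0) := by
    rw [hY3]
    show vP3 ε (Set.Ioo (10/14) 1) = _
    rw [vP3_apply ε hε0 hε1, cv_zero_right (y := 1) (a := (2/14)) (show (3:ℝ)/14 ≤ 10/14 by norm_num), cv_zero_right (y := 1) (a := (7/14)) (show (8:ℝ)/14 ≤ 10/14 by norm_num), cv_zero_right (y := 1) (a := (9/14)) (show (10:ℝ)/14 ≤ 10/14 by norm_num), cv_zero_right (y := 1) (a := (4/14)) (show (5:ℝ)/14 ≤ 10/14 by norm_num)]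
    congr 1
    ring
  have u30 : vEg4 ε 3 (Y.pieces 0) = ENNReal.ofReal (1/4) := by
    rw [hY0]
    show vP4 (Set.Ioo 0 (4/14)) = _
    rw [vP4_apply, cv_subset (show (0:ℝ) ≤ 0 by norm_num) (show (0:ℝ) ≤ 1/14 by norm_num) (show (1:ℝ)/14 ≤ 4/14 by norm_num), cv_zero_left (x := 0) (b := (6/14)) (show (4:ℝ)/14 ≤ 5/14 by norm_num), cv_zero_left (x := 0) (b := (11/14)) (show (4:ℝ)/14 ≤ 10/14 by norm_num), cv_zero_left (x := 0) (b := 1) (show (4:ℝ)/14 ≤ 13/14 by norm_num)]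
    congr 1
    ring
  have u31 : vEg4 ε 3 (Y.pieces 1) = ENNReal.ofReal (1/4) := by
    rw [hY1]
    show vP4 (Set.Ioo (5/14) (9/14)) = _
    rw [vP4_apply, cv_zero_right (y := (9/14)) (a := 0) (show (1:ℝ)/14 ≤ 5/14 by norm_num), cv_subset (show (5:ℝ)/14 ≤ 5/14 by norm_num) (show (5:ℝ)/14 ≤ 6/14 by norm_num) (show (6:ℝ)/14 ≤ 9/14 by norm_num), cv_zero_left (x := (5/14)) (b := (11/14)) (show (9:ℝ)/14 ≤ 10/14 by norm_num), cv_zero_left (x := (5/14)) (b := 1) (show (9:ℝ)/14 ≤ 13/14 by norm_num)]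
    congr 1
    ring
  have u32 : vEg4 ε 3 (Y.pieces 2) = ENNReal.ofReal (0) := by
    rw [hY2]
    show vP4 (Set.Ioo (9/14) (10/14)) = _
    rw [vP4_apply, cv_zero_right (y := (10/14)) (a := 0) (show (1:ℝ)/14 ≤ 9/14 by norm_num), cv_zero_right (y := (10/14)) (a := (5/14)) (show (6:ℝ)/14 ≤ 9/14 by norm_num), cv_zero_left (x := (9/14)) (b := (11/14)) (show (10:ℝ)/14 ≤ 10/14 by norm_num), cv_zero_left (x := (9/14)) (b := 1) (show (10:ℝ)/14 ≤ 13/14 by norm_num)]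
    congr 1
    ring
  have u33 : vEg4 ε 3 (Y.pieces 3) = ENNReal.ofReal (1/2) := by
    rw [hY3]
    show vP4 (Set.Ioo (10/14) 1) = _
    rw [vP4_apply, cv_zero_right (y := 1) (a := 0) (show (1:ℝ)/14 ≤ 10/14 by norm_num), cv_zero_right (y := 1) (a := (5/14)) (show (6:ℝ)/14 ≤ 10/14 by norm_num), cv_subset (show (10:ℝ)/14 ≤ 10/14 by norm_num) (show (10:ℝ)/14 ≤ 11/14 by norm_num) (show (11:ℝ)/14 ≤ 1 by norm_num), cv_subset (show (10:ℝ)/14 ≤ 13/14 by norm_num) (show (13:ℝ)/14 ≤ 1 by norm_num) (show (1:ℝ) ≤ 1 by norm_num)]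
    congr 1
    ring
  have hegal : egal (vEg4 ε) Y = ENNReal.ofReal ((1-ε)/3) := by
    apply le_antisymm
    · exact le_trans (iInf_le _ 2) (le_of_eq u22)
    · show _ ≤ ⨅ i, vEg4 ε i (Y.pieces i)
      apply le_iInf
      intro i
      fin_cases i
      · exact le_trans (ENNReal.ofReal_le_ofReal (by linarith)) (le_of_eq u00.symm)
      · exact le_trans (ENNReal.ofReal_le_ofReal (by linarith)) (le_of_eq u11.symm)
      · exact le_of_eq u22.symm
      · exact le_trans (ENNReal.ofReal_le_ofReal (by linarith)) (le_of_eq u33.symm)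
  refine ⟨Y, hY0, hY1, hY2, hY3, ?_, ?_, hegal, ?_⟩
  · intro i j
    fin_cases i <;> fin_cases j
    · exact le_rfl
    · exact (le_of_eq u01).trans ((ENNReal.ofReal_le_ofReal (by linarith)).trans (le_of_eq u00.symm))
    · exact (le_of_eq u02).trans ((ENNReal.ofReal_le_ofReal (by linarith)).trans (le_of_eq u00.symm))
    · exact (le_of_eq u03).trans ((ENNReal.ofReal_le_ofReal (by linarith)).trans (le_of_eq u00.symm))
    · exact (le_of_eq u10).trans ((ENNReal.ofReal_le_ofReal (by linarith)).trans (le_of_eq u11.symm))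
    · exact le_rfl
    · exact (le_of_eq u12).trans ((ENNReal.ofReal_le_ofReal (by linarith)).trans (le_of_eq u11.symm))
    · exact (le_of_eq u13).trans ((ENNReal.ofReal_le_ofReal (by linarith)).trans (le_of_eq u11.symm))
    · exact (le_of_eq u20).trans ((ENNReal.ofReal_le_ofReal (by linarith)).trans (le_of_eq u22.symm))
    · exact (le_of_eq u21).trans ((ENNReal.ofReal_le_ofReal (by linarith)).trans (le_of_eq u22.symm))
    · exact le_rfl
    · exact (le_of_eq u23).trans ((ENNReal.ofReal_le_ofReal (by linarith)).trans (le_of_eq u22.symm))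
    · exact (le_of_eq u30).trans ((ENNReal.ofReal_le_ofReal (by linarith)).trans (le_of_eq u33.symm))
    · exact (le_of_eq u31).trans ((ENNReal.ofReal_le_ofReal (by linarith)).trans (le_of_eq u33.symm))
    · exact (le_of_eq u32).trans ((ENNReal.ofReal_le_ofReal (by linarith)).trans (le_of_eq u33.symm))
    · exact le_rfl
  · intro hcomp
    obtain ⟨i, hi⟩ := Set.mem_iUnion.mp (hcomp (show (9/28:ℝ) ∈ Set.Icc (0:ℝ) 1 by norm_num))
    fin_cases i
    · have h9 : (9/28:ℝ) ∈ closure (Set.Ioo (0:ℝ) (4/14)) := by rw [← hY0]; exact hi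
      rw [closure_Ioo (by norm_num : (0:ℝ) ≠ 4/14), Set.mem_Icc] at h9
      norm_num at h9
    · have h9 : (9/28:ℝ) ∈ closure (Set.Ioo (5/14:ℝ) (9/14)) := by rw [← hY1]; exact hi
      rw [closure_Ioo (by norm_num : (5/14:ℝ) ≠ 9/14), Set.mem_Icc] at h9
      norm_num at h9
    · have h9 : (9/28:ℝ) ∈ closure (Set.Ioo (9/14:ℝ) (10/14)) := by rw [← hY2]; exact hi
      rw [closure_Ioo (by norm_num : (9/14:ℝ) ≠ 10/14), Set.mem_Icc] at h9
      norm_num at h9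
    · have h9 : (9/28:ℝ) ∈ closure (Set.Ioo (10/14:ℝ) 1) := by rw [← hY3]; exact hi
      rw [closure_Ioo (by norm_num : (10/14:ℝ) ≠ 1), Set.mem_Icc] at h9
      norm_num at h9
  · intro x hcomp hef
    have hxle : egal (vEg4 ε) x ≤ ENNReal.ofReal (1/4) := by
      by_contra hcon
      push_neg at hcon
      have e03 : vP1 ε (x.pieces 3) ≤ vP1 ε (x.pieces 0) := hef 0 3
      have e13 : vP2 ε (x.pieces 3) ≤ vP2 ε (x.pieces 1) := hef 1 3
      have e20 : vP3 ε (x.pieces 0) ≤ vP3 ε (x.pieces 2) := hef 2 0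
      have e21 : vP3 ε (x.pieces 1) ≤ vP3 ε (x.pieces 2) := hef 2 1
      rw [vP1_apply ε hε0 hε1, vP1_apply ε hε0 hε1] at e03
      rw [vP2_apply ε hε0 hε1, vP2_apply ε hε0 hε1] at e13
      rw [vP3_apply ε hε0 hε1, vP3_apply ε hε0 hε1] at e20
      rw [vP3_apply ε hε0 hε1, vP3_apply ε hε0 hε1] at e21
      have E03 := (ENNReal.ofReal_le_ofReal_iff (val1_nonneg ε hε0 hε1 _)).mp e03
      have E13 := (ENNReal.ofReal_le_ofReal_iff (val2_nonneg ε hε0 hε1 _)).mp e13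
      have E20 := (ENNReal.ofReal_le_ofReal_iff (val3_nonneg ε hε0 hε1 _)).mp e20
      have E21 := (ENNReal.ofReal_le_ofReal_iff (val3_nonneg ε hε0 hε1 _)).mp e21
      have o2e : ENNReal.ofReal (1/4) < vP3 ε (x.pieces 2) := lt_of_lt_of_le hcon (iInf_le _ 2)
      have o3e : ENNReal.ofReal (1/4) < vP4 (x.pieces 3) := lt_of_lt_of_le hcon (iInf_le _ 3)
      rw [vP3_apply ε hε0 hε1] at o2e
      rw [vP4_apply] at o3e
      have O2 := (ENNReal.ofReal_lt_ofReal_iff_of_nonneg (by norm_num)).mp o2e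
      have O3 := (ENNReal.ofReal_lt_ofReal_iff_of_nonneg (by norm_num)).mp o3e
      have S1 : cv (x.pieces 0) (1/14) (2/14) + cv (x.pieces 1) (1/14) (2/14) + cv (x.pieces 2) (1/14) (2/14) + cv (x.pieces 3) (1/14) (2/14) = 1/14 := by
        have := sum_cv x hcomp (show (0:ℝ) ≤ 1/14 by norm_num) (show (1:ℝ)/14 ≤ 2/14 by norm_num) (show (2:ℝ)/14 ≤ 1 by norm_num)
        linarith
      have S2 : cv (x.pieces 0) (2/14) (3/14) + cv (x.pieces 1) (2/14) (3/14) + cv (x.pieces 2) (2/14) (3/14) + cv (x.pieces 3) (2/14) (3/14) = 1/14 := by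
        have := sum_cv x hcomp (show (0:ℝ) ≤ 2/14 by norm_num) (show (2:ℝ)/14 ≤ 3/14 by norm_num) (show (3:ℝ)/14 ≤ 1 by norm_num)
        linarith
      have S3 : cv (x.pieces 0) (3/14) (4/14) + cv (x.pieces 1) (3/14) (4/14) + cv (x.pieces 2) (3/14) (4/14) + cv (x.pieces 3) (3/14) (4/14) = 1/14 := by
        have := sum_cv x hcomp (show (0:ℝ) ≤ 3/14 by norm_num) (show (3:ℝ)/14 ≤ 4/14 by norm_num) (show (4:ℝ)/14 ≤ 1 by norm_num)
        linarith
      have S4 : cv (x.pieces 0) (4/14) (5/14) + cv (x.pieces 1) (4/14) (5/14) + cv (x.pieces 2) (4/14) (5/14) + cv (x.pieces 3) (4/14) (5/14) = 1/14 := by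
        have := sum_cv x hcomp (show (0:ℝ) ≤ 4/14 by norm_num) (show (4:ℝ)/14 ≤ 5/14 by norm_num) (show (5:ℝ)/14 ≤ 1 by norm_num)
        linarith
      have S6 : cv (x.pieces 0) (6/14) (7/14) + cv (x.pieces 1) (6/14) (7/14) + cv (x.pieces 2) (6/14) (7/14) + cv (x.pieces 3) (6/14) (7/14) = 1/14 := by
        have := sum_cv x hcomp (show (0:ℝ) ≤ 6/14 by norm_num) (show (6:ℝ)/14 ≤ 7/14 by norm_num) (show (7:ℝ)/14 ≤ 1 by norm_num)
        linarith
      have S7 : cv (x.pieces 0) (7/14) (8/14) + cv (x.pieces 1) (7/14) (8/14) + cv (x.pieces 2) (7/14) (8/14) + cv (x.pieces 3) (7/14) (8/14) = 1/14 := by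
        have := sum_cv x hcomp (show (0:ℝ) ≤ 7/14 by norm_num) (show (7:ℝ)/14 ≤ 8/14 by norm_num) (show (8:ℝ)/14 ≤ 1 by norm_num)
        linarith
      have S8 : cv (x.pieces 0) (8/14) (9/14) + cv (x.pieces 1) (8/14) (9/14) + cv (x.pieces 2) (8/14) (9/14) + cv (x.pieces 3) (8/14) (9/14) = 1/14 := by
        have := sum_cv x hcomp (show (0:ℝ) ≤ 8/14 by norm_num) (show (8:ℝ)/14 ≤ 9/14 by norm_num) (show (9:ℝ)/14 ≤ 1 by norm_num)
        linarith
      have S9 : cv (x.pieces 0) (9/14) (10/14) + cv (x.pieces 1) (9/14) (10/14) + cv (x.pieces 2) (9/14) (10/14) + cv (x.pieces 3) (9/14) (10/14) = 1/14 := by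
        have := sum_cv x hcomp (show (0:ℝ) ≤ 9/14 by norm_num) (show (9:ℝ)/14 ≤ 10/14 by norm_num) (show (10:ℝ)/14 ≤ 1 by norm_num)
        linarith
      have S11 : cv (x.pieces 0) (11/14) (12/14) + cv (x.pieces 1) (11/14) (12/14) + cv (x.pieces 2) (11/14) (12/14) + cv (x.pieces 3) (11/14) (12/14) = 1/14 := by
        have := sum_cv x hcomp (show (0:ℝ) ≤ 11/14 by norm_num) (show (11:ℝ)/14 ≤ 12/14 by norm_num) (show (12:ℝ)/14 ≤ 1 by norm_num)
        linarith
      have S12 : cv (x.pieces 0) (12/14) (13/14) + cv (x.pieces 1) (12/14) (13/14) + cv (x.pieces 2) (12/14) (13/14) + cv (x.pieces 3) (12/14) (13/14) = 1/14 := by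
        have := sum_cv x hcomp (show (0:ℝ) ≤ 12/14 by norm_num) (show (12:ℝ)/14 ≤ 13/14 by norm_num) (show (13:ℝ)/14 ≤ 1 by norm_num)
        linarith
      have UB0 : cv (x.pieces 3) 0 (1/14) ≤ 1/14 := by
        have := cv_le (x.pieces 3) (show (0:ℝ) ≤ 1/14 by norm_num)
        linarith
      have UB5 : cv (x.pieces 3) (5/14) (6/14) ≤ 1/14 := by
        have := cv_le (x.pieces 3) (show (5:ℝ)/14 ≤ 6/14 by norm_num)
        linarith
      have UB10 : cv (x.pieces 3) (10/14) (11/14) ≤ 1/14 := by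
        have := cv_le (x.pieces 3) (show (10:ℝ)/14 ≤ 11/14 by norm_num)
        linarith
      have UB13 : cv (x.pieces 3) (13/14) 1 ≤ 1/14 := by
        have := cv_le (x.pieces 3) (show (13:ℝ)/14 ≤ 1 by norm_num)
        linarith
      have HA1 : 0 < cv (x.pieces 3) 0 (1/14) → 0 < cv (x.pieces 3) (5/14) (6/14) → cv (x.pieces 3) (1/14) (2/14) = 1/14 ∧ cv (x.pieces 3) (3/14) (4/14) = 1/14 := by
        intro h h'
        constructor
        · rw [piece_full (x.isInterval 3) h h' (show (1:ℝ)/14 ≤ 1/14 by norm_num) (show (1:ℝ)/14 ≤ 2/14 by norm_num) (show (2:ℝ)/14 ≤ 5/14 by norm_num)]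
          norm_num
        · rw [piece_full (x.isInterval 3) h h' (show (1:ℝ)/14 ≤ 3/14 by norm_num) (show (3:ℝ)/14 ≤ 4/14 by norm_num) (show (4:ℝ)/14 ≤ 5/14 by norm_num)]
          norm_num
      have HA2 : 0 < cv (x.pieces 3) 0 (1/14) → 0 < cv (x.pieces 3) (10/14) (11/14) → cv (x.pieces 3) (1/14) (2/14) = 1/14 ∧ cv (x.pieces 3) (3/14) (4/14) = 1/14 := by
        intro h h'
        constructor
        · rw [piece_full (x.isInterval 3) h h' (show (1:ℝ)/14 ≤ 1/14 by norm_num) (show (1:ℝ)/14 ≤ 2/14 by norm_num) (show (2:ℝ)/14 ≤ 10/14 by norm_num)]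
          norm_num
        · rw [piece_full (x.isInterval 3) h h' (show (1:ℝ)/14 ≤ 3/14 by norm_num) (show (3:ℝ)/14 ≤ 4/14 by norm_num) (show (4:ℝ)/14 ≤ 10/14 by norm_num)]
          norm_num
      have HA3 : 0 < cv (x.pieces 3) 0 (1/14) → 0 < cv (x.pieces 3) (13/14) 1 → cv (x.pieces 3) (1/14) (2/14) = 1/14 ∧ cv (x.pieces 3) (3/14) (4/14) = 1/14 := by
        intro h h'
        constructor
        · rw [piece_full (x.isInterval 3) h h' (show (1:ℝ)/14 ≤ 1/14 by norm_num) (show (1:ℝ)/14 ≤ 2/14 by norm_num) (show (2:ℝ)/14 ≤ 13/14 by norm_num)]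
          norm_num
        · rw [piece_full (x.isInterval 3) h h' (show (1:ℝ)/14 ≤ 3/14 by norm_num) (show (3:ℝ)/14 ≤ 4/14 by norm_num) (show (4:ℝ)/14 ≤ 13/14 by norm_num)]
          norm_num
      have HB1 : 0 < cv (x.pieces 3) (5/14) (6/14) → 0 < cv (x.pieces 3) (10/14) (11/14) → cv (x.pieces 3) (6/14) (7/14) = 1/14 ∧ cv (x.pieces 3) (8/14) (9/14) = 1/14 := by
        intro h h'
        constructor
        · rw [piece_full (x.isInterval 3) h h' (show (6:ℝ)/14 ≤ 6/14 by norm_num) (show (6:ℝ)/14 ≤ 7/14 by norm_num) (show (7:ℝ)/14 ≤ 10/14 by norm_num)]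
          norm_num
        · rw [piece_full (x.isInterval 3) h h' (show (6:ℝ)/14 ≤ 8/14 by norm_num) (show (8:ℝ)/14 ≤ 9/14 by norm_num) (show (9:ℝ)/14 ≤ 10/14 by norm_num)]
          norm_num
      have HB2 : 0 < cv (x.pieces 3) (5/14) (6/14) → 0 < cv (x.pieces 3) (13/14) 1 → cv (x.pieces 3) (6/14) (7/14) = 1/14 ∧ cv (x.pieces 3) (8/14) (9/14) = 1/14 := by
        intro h h'
        constructor
        · rw [piece_full (x.isInterval 3) h h' (show (6:ℝ)/14 ≤ 6/14 by norm_num) (show (6:ℝ)/14 ≤ 7/14 by norm_num) (show (7:ℝ)/14 ≤ 13/14 by norm_num)]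
          norm_num
        · rw [piece_full (x.isInterval 3) h h' (show (6:ℝ)/14 ≤ 8/14 by norm_num) (show (8:ℝ)/14 ≤ 9/14 by norm_num) (show (9:ℝ)/14 ≤ 13/14 by norm_num)]
          norm_num
      have HCC : 0 < cv (x.pieces 3) (10/14) (11/14) → 0 < cv (x.pieces 3) (13/14) 1 → cv (x.pieces 3) (11/14) (12/14) = 1/14 ∧ cv (x.pieces 3) (12/14) (13/14) = 1/14 := by
        intro h h'
        constructor
        · rw [piece_full (x.isInterval 3) h h' (show (11:ℝ)/14 ≤ 11/14 by norm_num) (show (11:ℝ)/14 ≤ 12/14 by norm_num) (show (12:ℝ)/14 ≤ 13/14 by norm_num)]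
          norm_num
        · rw [piece_full (x.isInterval 3) h h' (show (11:ℝ)/14 ≤ 12/14 by norm_num) (show (12:ℝ)/14 ≤ 13/14 by norm_num) (show (13:ℝ)/14 ≤ 13/14 by norm_num)]
          norm_num
      have HD : 0 < cv (x.pieces 3) (4/14) (5/14) → 0 < cv (x.pieces 3) (10/14) (11/14) → cv (x.pieces 3) (5/14) (6/14) = 1/14 := by
        intro h h'
        rw [piece_full (x.isInterval 3) h h' (show (5:ℝ)/14 ≤ 5/14 by norm_num) (show (5:ℝ)/14 ≤ 6/14 by norm_num) (show (6:ℝ)/14 ≤ 10/14 by norm_num)]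
        norm_num
      have HP1 : 0 < cv (x.pieces 0) (1/14) (2/14) → 0 < cv (x.pieces 0) (3/14) (4/14) → cv (x.pieces 0) (2/14) (3/14) = 1/14 := by
        intro h h'
        rw [piece_full (x.isInterval 0) h h' (show (2:ℝ)/14 ≤ 2/14 by norm_num) (show (2:ℝ)/14 ≤ 3/14 by norm_num) (show (3:ℝ)/14 ≤ 3/14 by norm_num)]
        norm_num
      have HP2 : 0 < cv (x.pieces 1) (6/14) (7/14) → 0 < cv (x.pieces 1) (8/14) (9/14) → cv (x.pieces 1) (7/14) (8/14) = 1/14 := by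
        intro h h'
        rw [piece_full (x.isInterval 1) h h' (show (7:ℝ)/14 ≤ 7/14 by norm_num) (show (7:ℝ)/14 ≤ 8/14 by norm_num) (show (8:ℝ)/14 ≤ 8/14 by norm_num)]
        norm_num
      have HP3 : 0 < cv (x.pieces 2) (4/14) (5/14) → 0 < cv (x.pieces 2) (9/14) (10/14) → cv (x.pieces 2) (7/14) (8/14) = 1/14 := by
        intro h h'
        rw [piece_full (x.isInterval 2) h h' (show (5:ℝ)/14 ≤ 7/14 by norm_num) (show (7:ℝ)/14 ≤ 8/14 by norm_num) (show (8:ℝ)/14 ≤ 9/14 by norm_num)]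
        norm_num
      exact impossibility ε
          (cv (x.pieces 0) (1/14) (2/14)) (cv (x.pieces 0) (2/14) (3/14)) (cv (x.pieces 0) (3/14) (4/14)) (cv (x.pieces 0) (4/14) (5/14)) (cv (x.pieces 0) (6/14) (7/14))
        (cv (x.pieces 0) (7/14) (8/14)) (cv (x.pieces 0) (8/14) (9/14)) (cv (x.pieces 0) (9/14) (10/14)) (cv (x.pieces 0) (11/14) (12/14)) (cv (x.pieces 0) (12/14) (13/14))
        (cv (x.pieces 1) (1/14) (2/14)) (cv (x.pieces 1) (2/14) (3/14)) (cv (x.pieces 1) (3/14) (4/14)) (cv (x.pieces 1) (4/14) (5/14)) (cv (x.pieces 1) (6/14) (7/14))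
        (cv (x.pieces 1) (7/14) (8/14)) (cv (x.pieces 1) (8/14) (9/14)) (cv (x.pieces 1) (9/14) (10/14)) (cv (x.pieces 1) (11/14) (12/14)) (cv (x.pieces 1) (12/14) (13/14))
        (cv (x.pieces 2) (1/14) (2/14)) (cv (x.pieces 2) (2/14) (3/14)) (cv (x.pieces 2) (3/14) (4/14)) (cv (x.pieces 2) (4/14) (5/14)) (cv (x.pieces 2) (6/14) (7/14))
        (cv (x.pieces 2) (7/14) (8/14)) (cv (x.pieces 2) (8/14) (9/14)) (cv (x.pieces 2) (9/14) (10/14)) (cv (x.pieces 2) (11/14) (12/14)) (cv (x.pieces 2) (12/14) (13/14))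
        (cv (x.pieces 3) 0 (1/14)) (cv (x.pieces 3) (1/14) (2/14)) (cv (x.pieces 3) (2/14) (3/14)) (cv (x.pieces 3) (3/14) (4/14)) (cv (x.pieces 3) (4/14) (5/14))
        (cv (x.pieces 3) (5/14) (6/14)) (cv (x.pieces 3) (6/14) (7/14)) (cv (x.pieces 3) (7/14) (8/14)) (cv (x.pieces 3) (8/14) (9/14)) (cv (x.pieces 3) (9/14) (10/14))
        (cv (x.pieces 3) (10/14) (11/14)) (cv (x.pieces 3) (11/14) (12/14)) (cv (x.pieces 3) (12/14) (13/14)) (cv (x.pieces 3) (13/14) 1)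
        hε hε'
        (cv_nonneg _ _ _) (cv_nonneg _ _ _) (cv_nonneg _ _ _) (cv_nonneg _ _ _) (cv_nonneg _ _ _) (cv_nonneg _ _ _) (cv_nonneg _ _ _) (cv_nonneg _ _ _) (cv_nonneg _ _ _) (cv_nonneg _ _ _) (cv_nonneg _ _ _) (cv_nonneg _ _ _) (cv_nonneg _ _ _) (cv_nonneg _ _ _) (cv_nonneg _ _ _) (cv_nonneg _ _ _) (cv_nonneg _ _ _) (cv_nonneg _ _ _) (cv_nonneg _ _ _) (cv_nonneg _ _ _) (cv_nonneg _ _ _) (cv_nonneg _ _ _) (cv_nonneg _ _ _) (cv_nonneg _ _ _) (cv_nonneg _ _ _) (cv_nonneg _ _ _) (cv_nonneg _ _ _) (cv_nonneg _ _ _) (cv_nonneg _ _ _) (cv_nonneg _ _ _) (cv_nonneg _ _ _) (cv_nonneg _ _ _) (cv_nonneg _ _ _) (cv_nonneg _ _ _) (cv_nonneg _ _ _) (cv_nonneg _ _ _) (cv_nonneg _ _ _) (cv_nonneg _ _ _) (cv_nonneg _ _ _) (cv_nonneg _ _ _) (cv_nonneg _ _ _) (cv_nonneg _ _ _) (cv_nonneg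 _ _ _) (cv_nonneg _ _ _)
        UB0 UB5 UB10 UB13
        S1 S2 S3 S4 S6 S7 S8 S9 S11 S12
        HA1 HA2 HA3 HB1 HB2 HCC HD HP1 HP2 HP3
        E03 E13 E20 E21 O2 O3
    calc ENNReal.ofReal (4*(1-ε)/3) * egal (vEg4 ε) x
        ≤ ENNReal.ofReal (4*(1-ε)/3) * ENNReal.ofReal (1/4) := mul_le_mul_right hxle _
      _ = ENNReal.ofReal ((1-ε)/3) := by
          rw [← ENNReal.ofReal_mul (show (0:ℝ) ≤ 4*(1-ε)/3 by linarith)]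
          congr 1
          ring
      _ = egal (vEg4 ε) Y := hegal.symm
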